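/- Let Q₂ be the kernel on {(x,z,y) ∈ ℕ³: x ≤ y} given by Q₂((x,z,y),(x',z',y')) = R(x,x') · P̄^{x←}(y,z') · (1−q) q^{y' − max(x',z')} (for max(x',z') ≤ y', x ≤ z' ≤ y, x' ≤ y'), let L₂((z₀,y₀),(x,z,y)) = (1_{x=0} + 2·1_{x>0}) (1/s₂(y)) 1_{x≤y} 1_{(z₀,y₀)=(z,y)}, and let S₂ be as defined via S₂((z₀,y₀),(z,y)) = (1−q)² (s₂(y)/s₂(y₀)) q^{y₀+y−2z} 1_{0<z≤min(y₀,y)} + ((1−q)²/(1+q)) (s₂(y)/s₂(y₀)) q^{y₀+y} 1_{z=0}. Then the intertwining L₂Q₂ = S₂L₂ holds, i.e. for all (z,y) with z ≤ y and all (x',z',y') with x' ≤ y', ∑_{x=0}^{z'} L₂((z,y),(x,z,y)) Q₂((x,z,y),(x',z',y')) = ∑_{(z'',y'')} S₂((z,y),(z'',y'')) L₂((z'',y''),(x',z',y')). -/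

import Mathlib

/-- The kernel R from the paper. -/
noncomputable def Rker (q : ℝ) (x y : ℕ) : ℝ :=
  if y = 0 then ((1 - q) / (1 + q)) * q ^ x
  else ((1 - q) / (1 + q)) * (q ^ (((x : ℤ) - y).natAbs) + q ^ (x + y))

/-- The kernel P̄^{u←}: P̄^{u←}(x,y) = (1−q) q^{x−y} if y ≥ u+1, and q^{x−u} if y = u. -/
noncomputable def Pleft (q : ℝ) (u x y : ℕ) : ℝ :=
  if y = u then q ^ (x - u) else (1 - q) * q ^ (x - y)

/-- The kernel S₂ on W = {(z,y) ∈ ℕ² : z ≤ y}, with s₂(y) = 2y+1. -/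
noncomputable def S2 (q : ℝ) (z0 y0 z y : ℕ) : ℝ :=
  if z = 0 then
    ((1 - q) ^ 2 / (1 + q)) * ((2 * (y : ℝ) + 1) / (2 * (y0 : ℝ) + 1)) * q ^ (y0 + y)
  else
    (if z ≤ min y0 y then (1 : ℝ) else 0) *
      ((1 - q) ^ 2 * ((2 * (y : ℝ) + 1) / (2 * (y0 : ℝ) + 1)) * q ^ (y0 + y - 2 * z))

/-- The kernel L₂ from W to ℕ × W. -/
noncomputable def L2 (z0 y0 x z y : ℕ) : ℝ :=
  if (z0, y0) = (z, y) ∧ x ≤ y then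
    (if x = 0 then (1 : ℝ) else 2) * (1 / (2 * (y : ℝ) + 1)) else 0

/-- The kernel Q₂:
Q₂((x,z,y),(x',z',y')) = R(x,x') P̄^{x←}(y,z') (1−q) q^{y'−max(x',z')},
vanishing when the interlacing constraints x ≤ z' ≤ y, max(x',z') ≤ y' fail. -/
noncomputable def Q2 (q : ℝ) (x z y x' z' y' : ℕ) : ℝ :=
  if x ≤ z' ∧ z' ≤ y ∧ max x' z' ≤ y' then
    Rker q x x' * Pleft q x y z' * ((1 - q) * q ^ (y' - max x' z')) else 0

/-!
`Rker` is the two-sided geometric kernel `(1-q)/(1+q) q^|j-j'|` on `ℤ` folded onto `ℕ`, and the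
weight `wt x = 1_{x=0} + 2·1_{x>0}` of `L₂` counts the integers of absolute value `x`.
Since `P̄^{x←}(y,z')` is `q^(y-z')` times `1` or `1-q` according as `x = z'` or not, `L₂Q₂` is,
up to factors free of `x`, the lumped sum `(1-q) ∑_{x<n} wt x R(x,x') + wt n R(n,x')` at `n = z'`.
For `n ≥ 1` its increments `2 (R(n+1,x') - q R(n,x'))` vanish once `n ≥ x'` and are
`2 (1-q)² q^(x'-n-1)` before, so it equals `(1-q) wt x' q^(max x' n - n)`; at `n = 0` it is
`R(0,x') = wt x' (1-q)/(1+q) q^x'`. These are the two branches of `S₂`.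
-/

open Finset

noncomputable def wt (x : ℕ) : ℝ := if x = 0 then 1 else 2

lemma wt_zero : wt 0 = 1 := if_pos rfl

lemma wt_of_ne_zero {x : ℕ} (hx : x ≠ 0) : wt x = 2 := if_neg hx

section Kernels

variable (q : ℝ)

lemma Rker_zero_right (x : ℕ) : Rker q x 0 = (1 - q) / (1 + q) * q ^ x := if_pos rfl

lemma Rker_zero_left (x' : ℕ) : Rker q 0 x' = wt x' * ((1 - q) / (1 + q)) * q ^ x' := by
  unfold Rker wt
  split_ifs with h
  · subst h; ring
  · rw [show ((0 : ℕ) - (x' : ℤ)).natAbs = x' by omega, zero_add]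
    ring

lemma Rker_succ_sub_mul (hq : 1 + q ≠ 0) (n x' : ℕ) :
    Rker q (n + 1) x' - q * Rker q n x' =
      if n < x' then (1 - q) ^ 2 * q ^ (x' - (n + 1)) else 0 := by
  rcases Nat.eq_zero_or_pos x' with rfl | hx'
  · simp only [Rker_zero_right, Nat.not_lt_zero, if_false]
    ring
  unfold Rker
  rw [if_neg hx'.ne', if_neg hx'.ne']
  split_ifs with hn
  · rw [show ((n + 1 : ℕ) - (x' : ℤ)).natAbs = x' - (n + 1) by omega,
      show ((n : ℤ) - x').natAbs = x' - (n + 1) + 1 by omega, pow_succ]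
    field_simp
    ring
  · rw [show ((n + 1 : ℕ) - (x' : ℤ)).natAbs = n - x' + 1 by omega,
      show ((n : ℤ) - x').natAbs = n - x' by omega]
    ring

lemma Pleft_eq (u x y : ℕ) : Pleft q u x y = (if y = u then 1 else 1 - q) * q ^ (x - y) := by
  unfold Pleft
  split_ifs with h
  · subst h; ring
  · rfl

end Kernels

lemma sum_range_succ_ite_mul (a : ℕ → ℝ) (c : ℝ) (n : ℕ) :
    ∑ x ∈ range (n + 1), (if n = x then 1 else c) * a x = c * ∑ x ∈ range n, a x + a n := by
  rw [sum_range_succ, if_pos rfl, one_mul, mul_sum]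
  congr 1
  refine sum_congr rfl fun x hx => ?_
  rw [if_neg (mem_range.mp hx).ne']

lemma lumped_Rker_eq (q : ℝ) (hq : 1 + q ≠ 0) (x' : ℕ) {n : ℕ} (hn : 1 ≤ n) :
    (1 - q) * ∑ x ∈ range n, wt x * Rker q x x' + wt n * Rker q n x' =
      (1 - q) * wt x' * q ^ (max x' n - n) := by
  induction n, hn using Nat.le_induction with
  | base =>
    have h := Rker_succ_sub_mul q hq 0 x'
    rw [zero_add, sub_eq_iff_eq_add] at h
    rw [sum_range_one, h, Rker_zero_left, wt_zero, wt_of_ne_zero one_ne_zero]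
    rcases Nat.eq_zero_or_pos x' with rfl | hx'
    · rw [if_neg (lt_irrefl 0), wt_zero, max_eq_right zero_le_one, Nat.sub_self, pow_zero]
      field_simp
      ring
    · rw [if_pos hx', show max x' 1 - 1 = x' - 1 by omega, wt_of_ne_zero hx'.ne',
        show x' = x' - 1 + 1 by omega, pow_succ, Nat.add_sub_cancel]
      field_simp
      ring
  | succ n hn ih =>
    calc (1 - q) * ∑ x ∈ range (n + 1), wt x * Rker q x x' + wt (n + 1) * Rker q (n + 1) x'
        = ((1 - q) * ∑ x ∈ range n, wt x * Rker q x x' + wt n * Rker q n x')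
            + 2 * (Rker q (n + 1) x' - q * Rker q n x') := by
          rw [sum_range_succ, wt_of_ne_zero (by omega : n ≠ 0), wt_of_ne_zero n.succ_ne_zero]
          ring
      _ = (1 - q) * wt x' * q ^ (max x' (n + 1) - (n + 1)) := by
          rw [ih, Rker_succ_sub_mul q hq]
          split_ifs with h
          · rw [wt_of_ne_zero (by omega), show max x' n - n = x' - (n + 1) + 1 by omega,
              show max x' (n + 1) - (n + 1) = x' - (n + 1) by omega, pow_succ]
            ring
          · rw [show max x' n - n = 0 by omega, show max x' (n + 1) - (n + 1) = 0 by omega]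
            ring

lemma L2_self (z y x : ℕ) : L2 z y x z y = if x ≤ y then wt x / (2 * y + 1) else 0 := by
  simp [L2, wt, div_eq_mul_inv]

lemma tsum_mul_L2 (f : ℕ × ℕ → ℝ) (x z y : ℕ) :
    ∑' p : ℕ × ℕ, f p * L2 p.1 p.2 x z y = f (z, y) * L2 z y x z y := by
  rw [tsum_eq_single (z, y)]
  intro p hp
  simp [L2, hp]

lemma sum_L2_mul_Q2 (q : ℝ) {z y x' z' y' : ℕ} (hz' : z' ≤ y) (hm : max x' z' ≤ y') :
    ∑ x ∈ range (z' + 1), L2 z y x z y * Q2 q x z y x' z' y' =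
      ((1 - q) * ∑ x ∈ range z', wt x * Rker q x x' + wt z' * Rker q z' x') *
        (q ^ (y - z') * ((1 - q) * q ^ (y' - max x' z')) / (2 * y + 1)) := by
  rw [← sum_range_succ_ite_mul, sum_mul]
  refine sum_congr rfl fun x hx => ?_
  have hxz : x ≤ z' := Nat.lt_succ_iff.mp (mem_range.mp hx)
  rw [L2_self, if_pos (hxz.trans hz'), Q2, if_pos ⟨hxz, hz', hm⟩, Pleft_eq]
  ring

theorem intertwining_L2Q2_S2L2_general (q : ℝ) (hq : q ∈ Set.Ioo (0:ℝ) 1)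
    (z y x' z' y' : ℕ) :
    (∑ x ∈ Finset.range (z' + 1), L2 z y x z y * Q2 q x z y x' z' y')
    = ∑' p : ℕ × ℕ, S2 q z y p.1 p.2 * L2 p.1 p.2 x' z' y' := by
  have hq1 : 1 + q ≠ 0 := by linarith [hq.1]
  rw [tsum_mul_L2 (fun p => S2 q z y p.1 p.2), L2_self]
  by_cases h : z' ≤ y ∧ max x' z' ≤ y'
  · obtain ⟨hz'y, hm⟩ := h
    rw [sum_L2_mul_Q2 q hz'y hm, if_pos (le_of_max_le_left hm)]
    rcases Nat.eq_zero_or_pos z' with rfl | hz'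
    · rw [range_zero, sum_empty, mul_zero, zero_add, Rker_zero_left, wt_zero, S2, if_pos rfl,
        _root_.max_zero, show y + y' = y - 0 + (x' + (y' - x')) by omega, pow_add, pow_add]
      field_simp
    · rw [lumped_Rker_eq q hq1 x' hz', S2, if_neg hz'.ne',
        if_pos (le_min hz'y (le_of_max_le_right hm)),
        show y + y' - 2 * z' = (max x' z' - z') + (y - z' + (y' - max x' z')) by omega,
        pow_add, pow_add]
      field_simp
  · rw [sum_eq_zero fun x _ => by rw [Q2, if_neg fun h' => h h'.2, mul_zero]]
    split_ifs with hx'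
    · have hz' : z' ≠ 0 := by
        rintro rfl
        exact h ⟨y.zero_le, (max_eq_left x'.zero_le).trans_le hx'⟩
      rw [S2, if_neg hz', if_neg (by omega), zero_mul, zero_mul]
    · rw [mul_zero]

/-- the intertwining L₂Q₂ = S₂L₂. -/
theorem intertwining_L2Q2_S2L2 (q : ℝ) (hq : q ∈ Set.Ioo (0:ℝ) 1)
    (z y x' z' y' : ℕ) (hzy : z ≤ y) (hx'y' : x' ≤ y') :
    (∑ x ∈ Finset.range (z' + 1), L2 z y x z y * Q2 q x z y x' z' y')
    = ∑' p : ℕ × ℕ, S2 q z y p.1 p.2 * L2 p.1 p.2 x' z' y' :=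
  intertwining_L2Q2_S2L2_general q hq z y x' z' y'
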